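/- arXiv:1309.6518 — 3 statements merged into one kernel-verified Lean document; each statement's English description precedes it below -/
import Mathlib

section
/- Higher-order fundamental lemma of the calculus of variations: Let f₀,…,f_n be continuous on [a,b] with each f_i being i times continuously differentiable. If ∫_a^b (∑_{i=0}^n f_i(t) η^(i)(t)) dt = 0 for all η ∈ C^{2n}([a,b],ℝ) satisfying η^(j)(a) = η^(j)(b) = 0 for j = 0,…,n-1, then ∑_{i=0}^n (-1)^i f_i^(i)(t) = 0 for all t ∈ [a,b]. -/
/-!
Integrating by parts `i` times moves the derivatives from `η` onto `f i` at the cost of a sign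
`(-1) ^ i`; the boundary terms vanish because `η` and its first `n - 1` derivatives vanish at `a`
and `b`. Hence `∑ i, (-1) ^ i * iteratedDeriv i (f i)` integrates to zero against every smooth
function supported in a compact subset of `(a, b)`, and the first-order fundamental lemma (a
locally integrable function orthogonal to all such test functions vanishes a.e.) together with
continuity makes it vanish on `[a, b]`.
-/

open MeasureTheory Set

theorem iteratedDeriv_eq_zero_of_notMem_tsupport {𝕜 F : Type*} [NontriviallyNormedField 𝕜]
    [NormedAddCommGroup F] [NormedSpace 𝕜 F] {f : 𝕜 → F} {x : 𝕜} (hx : x ∉ tsupport f)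
    (j : ℕ) : iteratedDeriv j f x = 0 := by
  rw [(notMem_tsupport_iff_eventuallyEq.mp hx).iteratedDeriv_eq j, iteratedDeriv_const_zero]

namespace intervalIntegral

variable {a b : ℝ}

theorem integral_mul_iteratedDeriv_eq (i : ℕ) {F η : ℝ → ℝ} (hF : ContDiff ℝ i F)
    (hη : ContDiff ℝ i η)
    (hη_bdry : ∀ j < i, iteratedDeriv j η a = 0 ∧ iteratedDeriv j η b = 0) :
    ∫ t in a..b, F t * iteratedDeriv i η t =
      (-1) ^ i * ∫ t in a..b, iteratedDeriv i F t * η t := by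
  induction i generalizing F with
  | zero => simp
  | succ i ih =>
    have hF' : ContDiff ℝ (i + 1) F := by exact_mod_cast hF
    have hFd : Differentiable ℝ F := hF.differentiable (by simp)
    have hηd : Differentiable ℝ (iteratedDeriv i η) :=
      hη.differentiable_iteratedDeriv i (by exact_mod_cast i.lt_succ_self)
    have by_parts := integral_mul_deriv_eq_deriv_mul (a := a) (b := b)
      (fun x _ => (hFd x).hasDerivAt)
      (fun x _ => by rw [iteratedDeriv_succ]; exact (hηd x).hasDerivAt)
      ((hF.continuous_deriv (by simp)).intervalIntegrable a b)
      ((hη.continuous_iteratedDeriv (i + 1) le_rfl).intervalIntegrable a b)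
    rw [by_parts, (hη_bdry i i.lt_succ_self).1, (hη_bdry i i.lt_succ_self).2,
      ih (contDiff_succ_iff_deriv.mp hF').2.2 (hη.of_le (by simp))
        fun j hj => hη_bdry j (hj.trans i.lt_succ_self),
      iteratedDeriv_succ']
    ring

theorem integral_sum_mul_iteratedDeriv_eq (n : ℕ) {F : ℕ → ℝ → ℝ} {η : ℝ → ℝ}
    (hF : ∀ i ≤ n, ContDiff ℝ i (F i)) (hη : ContDiff ℝ n η)
    (hη_bdry : ∀ j < n, iteratedDeriv j η a = 0 ∧ iteratedDeriv j η b = 0) :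
    ∫ t in a..b, ∑ i ∈ Finset.range (n + 1), F i t * iteratedDeriv i η t =
      ∫ t in a..b, (∑ i ∈ Finset.range (n + 1), (-1) ^ i * iteratedDeriv i (F i) t) * η t := by
  have hη' (i : ℕ) (hi : i ≤ n) : ContDiff ℝ i η := hη.of_le (by exact_mod_cast hi)
  simp_rw [Finset.sum_mul, mul_assoc]
  rw [integral_finsetSum, integral_finsetSum]
  · refine Finset.sum_congr rfl fun i hi => ?_
    have hin := Finset.mem_range_succ_iff.mp hi
    rw [integral_const_mul, integral_mul_iteratedDeriv_eq i (hF i hin) (hη' i hin)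
      fun j hj => hη_bdry j (hj.trans_le hin)]
  · intro i hi
    have hin := Finset.mem_range_succ_iff.mp hi
    exact (continuous_const.mul (((hF i hin).continuous_iteratedDeriv i le_rfl).mul
      hη.continuous)).intervalIntegrable a b
  · intro i hi
    have hin := Finset.mem_range_succ_iff.mp hi
    exact ((hF i hin).continuous.mul
      ((hη' i hin).continuous_iteratedDeriv i le_rfl)).intervalIntegrable a b

end intervalIntegral

open scoped ContDiff in
theorem eqOn_Icc_zero_of_integral_mul_eq_zero {a b : ℝ} (hab : a < b) {g : ℝ → ℝ}
    (hg : Continuous g)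
    (h : ∀ η : ℝ → ℝ, ContDiff ℝ ∞ η → tsupport η ⊆ Ioo a b → ∫ t in a..b, g t * η t = 0) :
    EqOn g 0 (Icc a b) := by
  have hae : ∀ᵐ x, x ∈ Ioo a b → g x = 0 :=
    isOpen_Ioo.ae_eq_zero_of_integral_contDiff_smul_eq_zero
      (hg.locallyIntegrable.locallyIntegrableOn _) fun η hη _ hη_supp => by
        rw [← h η hη hη_supp, intervalIntegral.integral_of_le hab.le,
          setIntegral_eq_integral_of_forall_compl_eq_zero fun x hx => ?_]
        · simp_rw [smul_eq_mul, mul_comm]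
        · rw [image_eq_zero_of_notMem_tsupport fun hx' => hx (Ioo_subset_Ioc_self
            (hη_supp hx')), mul_zero]
  have hIoo : EqOn g 0 (Ioo a b) := Measure.eqOn_Ioo_of_ae_eq volume
    ((ae_restrict_iff' measurableSet_Ioo).2 hae) hg.continuousOn continuousOn_const
  rw [← closure_Ioo hab.ne]
  exact hIoo.closure hg continuous_const

theorem higher_order_fundamental_lemma_general
    (n : ℕ) (a b : ℝ) (hab : a < b) (f : ℕ → ℝ → ℝ)
    (hf : ∀ i ≤ n, ContDiff ℝ i (f i))
    (h : ∀ η : ℝ → ℝ, ContDiff ℝ (2 * n) η →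
      (∀ j < n, iteratedDeriv j η a = 0 ∧ iteratedDeriv j η b = 0) →
      ∫ t in a..b, ∑ i ∈ Finset.range (n + 1), f i t * iteratedDeriv i η t = 0) :
    ∀ t ∈ Set.Icc a b,
      ∑ i ∈ Finset.range (n + 1), (-1 : ℝ) ^ i * iteratedDeriv i (f i) t = 0 := by
  refine eqOn_Icc_zero_of_integral_mul_eq_zero hab
    (continuous_finsetSum _ fun i hi => continuous_const.mul
      ((hf i (Finset.mem_range_succ_iff.mp hi)).continuous_iteratedDeriv i le_rfl))
    fun η hη hη_supp => ?_
  have hη_bdry (j : ℕ) : iteratedDeriv j η a = 0 ∧ iteratedDeriv j η b = 0 :=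
    ⟨iteratedDeriv_eq_zero_of_notMem_tsupport (fun ha => (hη_supp ha).1.false) j,
      iteratedDeriv_eq_zero_of_notMem_tsupport (fun hb => (hη_supp hb).2.false) j⟩
  rw [← intervalIntegral.integral_sum_mul_iteratedDeriv_eq n hf (contDiff_infty.1 hη _)
    fun j _ => hη_bdry j]
  exact h η (contDiff_infty.1 hη _) fun j _ => hη_bdry j

/-- Higher-order fundamental lemma of the calculus of variations. -/
theorem higher_order_fundamental_lemma
    (n : ℕ) (a b : ℝ) (hab : a < b) (f : ℕ → ℝ → ℝ)
    (hfc : ∀ i ≤ n, Continuous (f i))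
    (hf : ∀ i ≤ n, ContDiff ℝ i (f i))
    (h : ∀ η : ℝ → ℝ, ContDiff ℝ (2 * n) η →
      (∀ j < n, iteratedDeriv j η a = 0 ∧ iteratedDeriv j η b = 0) →
      ∫ t in a..b, ∑ i ∈ Finset.range (n + 1), f i t * iteratedDeriv i η t = 0) :
    ∀ t ∈ Set.Icc a b,
      ∑ i ∈ Finset.range (n + 1), (-1 : ℝ) ^ i * iteratedDeriv i (f i) t = 0 :=
  higher_order_fundamental_lemma_general n a b hab f hf h
end

section
/- Natural boundary conditions for the Herglotz problem (first order, free right endpoint): Suppose x ∈ C²([a,b],ℝ) extremizes z(b), where ż = L(t,x,ẋ,z), z(a) = γ, x(a) = α fixed, and x(b) is free. Then x satisfies the generalized Euler–Lagrange equation L_x + L_z L_ẋ - (d/dt)L_ẋ = 0 on [a,b], and the transversality condition λ(b)·L_ẋ(b,x(b),ẋ(b),z(b)) = 0, equivalently L_ẋ(b,x(b),ẋ(b),z(b)) = 0 since λ(b) > 0. -/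
/-!
Perturb `x` to `x + εη` with `η a = 0` and let `w` solve the Herglotz equation along it with
`w a = γ`. The deviation `u = w - z` solves `u' = L(t, x + εη, ẋ + εη', z + u) - L(t, x, ẋ, z)`,
and the integrating factor `λ t = exp (-∫_a^t L_z)` of its linearisation gives
`λ b * u b = ε ∫_a^b λ (L_x η + L_ẋ η') + o(ε)`. Extremality of `z b` forces this first variation
to vanish. Integrating by parts it equals `λ b * L_ẋ b * η b + ∫_a^b λ η (L_x + L_z L_ẋ - L_ẋ')`:
test functions supported in `(a, b)` give the Euler–Lagrange equation, and `η t = t - a` then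
gives `L_ẋ b = 0`.

As `L` is only `C¹`, `w` comes from Picard–Lindelöf for the field with the deviation clamped to
`[-1, 1]`, which is globally Lipschitz; Grönwall gives `|u| = O(ε)`, so for small `ε` the clamp
is inactive.
-/

open Set Real MeasureTheory intervalIntegral Filter Topology Metric
open scoped NNReal ContDiff

section CompactEstimates

variable {E G : Type*} [NormedAddCommGroup E] [NormedSpace ℝ E] [ProperSpace E]
  [NormedAddCommGroup G] [NormedSpace ℝ G] {f : E → G}

theorem ContDiff.exists_lipschitzOnWith_closedBall (hf : ContDiff ℝ 1 f) {K : Set E}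
    (hK : IsCompact K) (ρ : ℝ) : ∃ M : ℝ≥0, ∀ p ∈ K, LipschitzOnWith M f (closedBall p ρ) := by
  obtain ⟨M, hM⟩ := (hK.cthickening (r := ρ)).exists_bound_of_continuousOn
    (hf.continuous_fderiv one_ne_zero).continuousOn
  refine ⟨M.toNNReal, fun p hp => (convex_closedBall p ρ).lipschitzOnWith_of_nnnorm_fderiv_le
    (fun r _ => hf.differentiable one_ne_zero r) fun r hr => ?_⟩
  rw [← NNReal.coe_le_coe, coe_nnnorm]
  exact (hM r (closedBall_subset_cthickening hp ρ hr)).trans (le_coe_toNNReal M)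

theorem ContDiff.exists_forall_norm_sub_sub_fderiv_le (hf : ContDiff ℝ 1 f) {K : Set E}
    (hK : IsCompact K) {c : ℝ} (hc : 0 < c) :
    ∃ δ > 0, ∀ p ∈ K, ∀ h : E, ‖h‖ ≤ δ → ‖f (p + h) - f p - fderiv ℝ f p h‖ ≤ c * ‖h‖ := by
  obtain ⟨δ₀, hδ₀, hclose⟩ := Metric.uniformContinuousOn_iff_le.1
    ((hK.cthickening (r := 1)).uniformContinuousOn_of_continuous
      (hf.continuous_fderiv one_ne_zero).continuousOn) c hc
  set δ := min 1 δ₀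
  refine ⟨δ, lt_min one_pos hδ₀, fun p hp h hh => ?_⟩
  have hball : closedBall p δ ⊆ cthickening 1 K :=
    (closedBall_subset_closedBall (min_le_left _ _)).trans (closedBall_subset_cthickening hp 1)
  have hp' : p ∈ closedBall p δ := mem_closedBall_self (le_trans (norm_nonneg h) hh)
  have hbound : ∀ r ∈ closedBall p δ, ‖fderiv ℝ f r - fderiv ℝ f p‖ ≤ c := fun r hr => by
    simpa [dist_eq_norm] using
      hclose r (hball hr) p (hball hp') ((mem_closedBall.1 hr).trans (min_le_right _ _))
  simpa using (convex_closedBall p δ).norm_image_sub_le_of_norm_fderiv_le'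
    (fun r _ => hf.differentiable one_ne_zero r) hbound hp'
    (by simpa [dist_eq_norm] using hh : p + h ∈ closedBall p δ)

end CompactEstimates

theorem exists_forall_mem_Ioo_hasDerivAt_of_lipschitzWith {E : Type*} [NormedAddCommGroup E]
    [NormedSpace ℝ E] [CompleteSpace E] {v : ℝ → E → E} {c d t₀ : ℝ} (ht₀ : t₀ ∈ Icc c d)
    {K : ℝ≥0} {M : ℝ} (hcont : ∀ x, ContinuousOn (v · x) (Icc c d))
    (hlip : ∀ t ∈ Icc c d, LipschitzWith K (v t)) (hbound : ∀ t ∈ Icc c d, ∀ x, ‖v t x‖ ≤ M)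
    (x₀ : E) : ∃ u : ℝ → E, u t₀ = x₀ ∧ ∀ t ∈ Ioo c d, HasDerivAt u (v t (u t)) t := by
  have hM : 0 ≤ M := (norm_nonneg _).trans (hbound t₀ ht₀ x₀)
  have hPL : IsPicardLindelof v ⟨t₀, ht₀⟩ x₀ (M * (d - c)).toNNReal 0 M.toNNReal K :=
    { lipschitzOnWith := fun t ht => (hlip t ht).lipschitzOnWith
      continuousOn := fun x _ => hcont x
      norm_le := fun t ht x _ => (hbound t ht x).trans (le_coe_toNNReal M)
      mul_max_le := by
        rw [coe_toNNReal _ hM, NNReal.coe_zero, sub_zero,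
          coe_toNNReal _ (mul_nonneg hM (by linarith [ht₀.1, ht₀.2]))]
        exact mul_le_mul_of_nonneg_left (max_le (by linarith [ht₀.1]) (by linarith [ht₀.2])) hM }
  obtain ⟨u, hu₀, hu⟩ := hPL.exists_eq_forall_mem_Icc_hasDerivWithinAt₀
  exact ⟨u, hu₀, fun t ht => (hu t (Ioo_subset_Icc_self ht)).hasDerivAt (Icc_mem_nhds ht.1 ht.2)⟩

theorem abs_le_of_abs_deriv_le_mul_abs_add {u u' : ℝ → ℝ} {a b K ε : ℝ} (hK : 0 ≤ K)
    (hε : 0 ≤ ε) (hu₀ : u a = 0) (hu : ∀ t ∈ Icc a b, HasDerivAt u (u' t) t)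
    (hbound : ∀ t ∈ Icc a b, |u' t| ≤ K * |u t| + ε) :
    ∀ t ∈ Icc a b, |u t| ≤ ε * gronwallBound 0 K 1 (b - a) := by
  intro t ht
  have hgron := norm_le_gronwallBound_of_norm_deriv_right_le (δ := 0)
    (fun s hs => (hu s hs).continuousAt.continuousWithinAt)
    (fun s hs => (hu s (Ico_subset_Icc_self hs)).hasDerivWithinAt) (by simp [hu₀])
    (fun s hs => hbound s (Ico_subset_Icc_self hs)) t ht
  have hscale : gronwallBound 0 K ε (t - a) = ε * gronwallBound 0 K 1 (t - a) := by
    simp only [gronwallBound]; split_ifs <;> ring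
  calc |u t| ≤ ε * gronwallBound 0 K 1 (t - a) := hscale ▸ hgron
    _ ≤ ε * gronwallBound 0 K 1 (b - a) :=
      mul_le_mul_of_nonneg_left (gronwallBound_mono le_rfl zero_le_one hK (by linarith [ht.2])) hε

noncomputable def unitClamp (u : ℝ) : ℝ := projIcc (-1) 1 (by norm_num) u

theorem abs_unitClamp_sub_le (u v : ℝ) : |unitClamp u - unitClamp v| ≤ |u - v| :=
  abs_projIcc_sub_projIcc _

theorem abs_unitClamp_le_one (u : ℝ) : |unitClamp u| ≤ 1 :=
  abs_le.2 (projIcc (-1) 1 _ u).2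

theorem unitClamp_of_abs_le {u : ℝ} (hu : |u| ≤ 1) : unitClamp u = u := by
  simp [unitClamp, projIcc_of_mem _ (abs_le.1 hu)]

theorem abs_unitClamp_le (u : ℝ) : |unitClamp u| ≤ |u| := by
  simpa [unitClamp_of_abs_le (u := 0) (by norm_num)] using abs_unitClamp_sub_le u 0

theorem eqOn_zero_of_forall_integral_mul_eq_zero {g : ℝ → ℝ} {a b : ℝ} (hab : a < b)
    (hg : ContinuousOn g (Icc a b))
    (h : ∀ η : ℝ → ℝ, ContDiff ℝ ∞ η → tsupport η ⊆ Ioo a b → ∫ t in a..b, η t * g t = 0) :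
    EqOn g 0 (Icc a b) := by
  have hae : ∀ᵐ t, t ∈ Ioo a b → g t = 0 :=
    isOpen_Ioo.ae_eq_zero_of_integral_contDiff_smul_eq_zero
      ((hg.mono Ioo_subset_Icc_self).locallyIntegrableOn measurableSet_Ioo)
      fun η hη _ hsupp => by
        rw [← h η hη hsupp, integral_of_le hab.le, setIntegral_eq_integral_of_forall_compl_eq_zero]
        · rfl
        · intro t ht
          rw [image_eq_zero_of_notMem_tsupport fun h => ht (Ioo_subset_Ioc_self (hsupp h)),
            zero_mul]
  have hIoo : EqOn g 0 (Ioo a b) :=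
    Measure.eqOn_open_of_ae_eq ((ae_restrict_iff' measurableSet_Ioo).2 hae) isOpen_Ioo
      (hg.mono Ioo_subset_Icc_self) continuousOn_const
  exact hIoo.of_subset_closure hg continuousOn_const Ioo_subset_Icc_self
    (closure_Ioo hab.ne).symm.subset

theorem eq_zero_of_forall_eventually_exists_abs_sub_mul_le_of_nonneg {P : ℝ → ℝ → Prop} {J : ℝ}
    (happrox : ∀ c > 0, ∀ᶠ ε in 𝓝 (0 : ℝ), ∃ v, P ε v ∧ |v - ε * J| ≤ c * |ε|)
    (hnonneg : ∀ ε v, P ε v → 0 ≤ v) : J = 0 := by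
  by_contra hJ
  have hJpos : 0 < |J| := abs_pos.2 hJ
  obtain ⟨δ, hδ, hball⟩ := Metric.eventually_nhds_iff.1 (happrox (|J| / 2) (by positivity))
  set s := δ / (2 * |J|)
  have hs : 0 < s := by positivity
  have hsJ : s * |J| = δ / 2 := by simp only [s]; field_simp
  have hdist : dist (-(s * J)) 0 < δ := by
    rw [dist_zero_right, norm_neg, norm_mul, Real.norm_of_nonneg hs.le, Real.norm_eq_abs, hsJ]
    linarith
  -- at `ε = -sJ` the linear term `-sJ²` beats the error `sJ²/2`, so `v < 0`
  obtain ⟨v, hv, hclose⟩ := hball hdist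
  rw [abs_neg, abs_mul, abs_of_pos hs] at hclose
  have hv_le : v ≤ -(s * J) * J + |J| / 2 * (s * |J|) := by linarith [(abs_le.1 hclose).2]
  have hneg : -(s * J) * J + |J| / 2 * (s * |J|) = -(s * (|J| * |J|)) / 2 := by
    linear_combination s * abs_mul_abs_self J
  linarith [hnonneg _ _ hv, mul_pos hs (mul_pos hJpos hJpos)]

theorem eq_zero_of_forall_eventually_exists_abs_sub_mul_le {P : ℝ → ℝ → Prop} {J : ℝ}
    (happrox : ∀ c > 0, ∀ᶠ ε in 𝓝 (0 : ℝ), ∃ v, P ε v ∧ |v - ε * J| ≤ c * |ε|)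
    (hsign : (∀ ε v, P ε v → 0 ≤ v) ∨ (∀ ε v, P ε v → v ≤ 0)) : J = 0 := by
  rcases hsign with hnonneg | hnonpos
  · exact eq_zero_of_forall_eventually_exists_abs_sub_mul_le_of_nonneg happrox hnonneg
  · refine neg_eq_zero.1 (eq_zero_of_forall_eventually_exists_abs_sub_mul_le_of_nonneg
      (P := fun ε v => P ε (-v)) (fun c hc => (happrox c hc).mono fun ε ⟨v, hv, hclose⟩ =>
        ⟨-v, by rwa [neg_neg], ?_⟩) fun ε v hv => neg_nonpos.1 (hnonpos ε _ hv))
    rwa [mul_neg, neg_sub_neg, abs_sub_comm]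

section IntegratingFactor

variable {A : ℝ → ℝ} {a b : ℝ}

noncomputable def integratingFactor (A : ℝ → ℝ) (a t : ℝ) : ℝ := exp (-∫ θ in a..t, A θ)

theorem integratingFactor_pos (A : ℝ → ℝ) (a t : ℝ) : 0 < integratingFactor A a t := exp_pos _

@[simp]
theorem integratingFactor_self (A : ℝ → ℝ) (a : ℝ) : integratingFactor A a a = 1 := by
  simp [integratingFactor]

theorem hasDerivAt_integratingFactor (hA : Continuous A) (a t : ℝ) :
    HasDerivAt (integratingFactor A a) (-A t * integratingFactor A a t) t := by
  have hI := integral_hasDerivAt_right (hA.intervalIntegrable a t)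
    hA.stronglyMeasurable.stronglyMeasurableAtFilter hA.continuousAt
  convert hI.neg.exp using 1
  · rfl
  · simp [integratingFactor, mul_comm]

theorem continuous_integratingFactor (hA : Continuous A) (a : ℝ) :
    Continuous (integratingFactor A a) :=
  continuous_iff_continuousAt.2 fun t => (hasDerivAt_integratingFactor hA a t).continuousAt

theorem integratingFactor_congr {A' : ℝ → ℝ} (h : EqOn A A' (Icc a b)) {t : ℝ}
    (ht : t ∈ Icc a b) : integratingFactor A a t = integratingFactor A' a t := by
  unfold integratingFactor
  congr 2
  refine integral_congr fun θ hθ => h ?_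
  rw [uIcc_of_le ht.1] at hθ
  exact ⟨hθ.1, hθ.2.trans ht.2⟩

theorem abs_integratingFactor_mul_sub_integral_le {B u u' : ℝ → ℝ} {κ Λ : ℝ} (hab : a ≤ b)
    (hA : Continuous A) (hB : Continuous B) (hu₀ : u a = 0)
    (hu : ∀ t ∈ Icc a b, HasDerivAt u (u' t) t)
    (hκ : ∀ t ∈ Icc a b, |u' t - A t * u t - B t| ≤ κ)
    (hΛ : ∀ t ∈ Icc a b, integratingFactor A a t ≤ Λ) :
    |integratingFactor A a b * u b - ∫ t in a..b, integratingFactor A a t * B t| ≤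
      Λ * κ * (b - a) := by
  set μ := integratingFactor A a
  have hμB : Continuous fun t => μ t * B t := (continuous_integratingFactor hA a).mul hB
  have hderiv : ∀ t ∈ Icc a b, HasDerivWithinAt (fun s => μ s * u s - ∫ θ in a..s, μ θ * B θ)
      (μ t * (u' t - A t * u t - B t)) (Icc a b) t := fun t ht => by
    have h := ((hasDerivAt_integratingFactor hA a t).mul (hu t ht)).sub
      (integral_hasDerivAt_right (hμB.intervalIntegrable a t)
        hμB.stronglyMeasurable.stronglyMeasurableAtFilter hμB.continuousAt)
    exact (h.congr_deriv (by ring)).hasDerivWithinAt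
  have hbound : ∀ t ∈ Icc a b, ‖μ t * (u' t - A t * u t - B t)‖ ≤ Λ * κ := fun t ht => by
    rw [norm_mul, Real.norm_of_nonneg (integratingFactor_pos A a t).le]
    exact mul_le_mul (hΛ t ht) (hκ t ht) (abs_nonneg _)
      ((integratingFactor_pos A a t).le.trans (hΛ t ht))
  have h := (convex_Icc a b).norm_image_sub_le_of_norm_hasDerivWithin_le hderiv hbound
    (left_mem_Icc.2 hab) (right_mem_Icc.2 hab)
  simpa [hu₀, Real.norm_eq_abs, abs_of_nonneg (sub_nonneg.2 hab)] using h

theorem integral_integratingFactor_mul_eq {f g η : ℝ → ℝ} (hab : a ≤ b) (hA : Continuous A)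
    (hf : ContinuousOn f (Icc a b)) (hg : ContDiff ℝ 1 g) (hη : ContDiff ℝ 1 η) :
    ∫ t in a..b, integratingFactor A a t * (f t * η t + g t * deriv η t) =
      integratingFactor A a b * g b * η b - g a * η a +
        ∫ t in a..b, η t * (integratingFactor A a t * (f t + A t * g t - deriv g t)) := by
  set μ := integratingFactor A a
  have hμ := continuous_integratingFactor hA a
  have hg' := hg.continuous_deriv le_rfl
  have hη' := hη.continuous_deriv le_rfl
  have hfI : ContinuousOn f (uIcc a b) := by rwa [uIcc_of_le hab]
  have hμg' : Continuous fun t => -A t * μ t * g t + μ t * deriv g t := by fun_prop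
  have hparts := intervalIntegral.integral_mul_deriv_eq_deriv_mul (u := fun t => μ t * g t)
    (v := η)
    (fun t _ =>
      (hasDerivAt_integratingFactor hA a t).mul (hg.differentiable one_ne_zero t).hasDerivAt)
    (fun t _ => (hη.differentiable one_ne_zero t).hasDerivAt) (hμg'.intervalIntegrable a b)
    (hη'.intervalIntegrable a b)
  have hint₁ : IntervalIntegrable (fun t => μ t * f t * η t) volume a b :=
    ((hμ.continuousOn.mul hfI).mul hη.continuous.continuousOn).intervalIntegrable
  have hint₂ : IntervalIntegrable (fun t => μ t * g t * deriv η t) volume a b := by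
    apply Continuous.intervalIntegrable; fun_prop
  have hint₃ : IntervalIntegrable (fun t => (-A t * μ t * g t + μ t * deriv g t) * η t)
      volume a b := (hμg'.mul hη.continuous).intervalIntegrable a b
  calc ∫ t in a..b, μ t * (f t * η t + g t * deriv η t)
      = (∫ t in a..b, μ t * f t * η t) + ∫ t in a..b, μ t * g t * deriv η t := by
        rw [← integral_add hint₁ hint₂]; congr 1; ext t; ring
    _ = μ b * g b * η b - g a * η a + ∫ t in a..b,
          (μ t * f t * η t - (-A t * μ t * g t + μ t * deriv g t) * η t) := by
        rw [hparts, integral_sub hint₁ hint₃]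
        simp only [μ, integratingFactor_self]
        ring
    _ = _ := by congr 1; refine integral_congr fun t _ => ?_; ring

theorem euler_lagrange_of_forall_integral_eq_zero {f g : ℝ → ℝ} (hab : a < b)
    (hA : Continuous A) (hf : ContinuousOn f (Icc a b)) (hg : ContDiff ℝ 1 g)
    (h : ∀ η : ℝ → ℝ, ContDiff ℝ ∞ η → η a = 0 →
      ∫ t in a..b, integratingFactor A a t * (f t * η t + g t * deriv η t) = 0) :
    (∀ t ∈ Icc a b, f t + A t * g t - deriv g t = 0) ∧ g b = 0 := by
  have hparts := fun η (hη : ContDiff ℝ ∞ η) =>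
    integral_integratingFactor_mul_eq hab.le hA hf hg (hη.of_le (by norm_cast))
  have hE : EqOn (fun t => integratingFactor A a t * (f t + A t * g t - deriv g t)) 0
      (Icc a b) := by
    refine eqOn_zero_of_forall_integral_mul_eq_zero hab ?_ fun η hη hsupp => ?_
    · exact (continuous_integratingFactor hA a).continuousOn.mul
        ((hf.add (hA.mul hg.continuous).continuousOn).sub
          (hg.continuous_deriv le_rfl).continuousOn)
    · have hηa : η a = 0 := image_eq_zero_of_notMem_tsupport fun ha => (hsupp ha).1.false
      have hηb : η b = 0 := image_eq_zero_of_notMem_tsupport fun hb => (hsupp hb).2.false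
      simpa [hparts η hη, hηa, hηb] using h η hη hηa
  have hEL : ∀ t ∈ Icc a b, f t + A t * g t - deriv g t = 0 := fun t ht =>
    (mul_eq_zero.1 (hE ht)).resolve_left (integratingFactor_pos A a t).ne'
  refine ⟨hEL, ?_⟩
  have hlin := h (fun t => t - a) (contDiff_id.sub contDiff_const) (sub_self a)
  rw [hparts (fun t => t - a) (contDiff_id.sub contDiff_const),
    integral_congr (g := fun _ => 0) fun t ht => by
      rw [uIcc_of_le hab.le] at ht; simp [hEL t ht]] at hlin
  have hμb := integratingFactor_pos A a b
  have hba : b - a ≠ 0 := sub_ne_zero.2 hab.ne'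
  simpa [hμb.ne', hba] using hlin

end IntegratingFactor

section FirstVariation

variable {E : Type*} [NormedAddCommGroup E] [NormedSpace ℝ E] [ProperSpace E] {F : E → ℝ}
  {p q : ℝ → E}

theorem exists_abs_sub_le_of_perturbation (hF : ContDiff ℝ 1 F) (hp : Continuous p)
    (hq : Continuous q) (e : E) (c d : ℝ) :
    ∃ Q M : ℝ, 0 ≤ Q ∧ 0 ≤ M ∧ ∀ t ∈ Icc c d, ∀ ε ε' s s' : ℝ,
      |ε| ≤ 1 → |ε'| ≤ 1 → |s| ≤ 1 → |s'| ≤ 1 →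
      |F (p t + ε • q t + s • e) - F (p t + ε' • q t + s' • e)| ≤
        M * (|ε - ε'| * Q + |s - s'| * ‖e‖) := by
  obtain ⟨Q, hQ⟩ := (isCompact_Icc (a := c) (b := d)).exists_bound_of_continuousOn hq.continuousOn
  obtain ⟨M, hM⟩ := hF.exists_lipschitzOnWith_closedBall
    ((isCompact_Icc (a := c) (b := d)).image hp) (Q + ‖e‖)
  refine ⟨max Q 0, M, le_max_right _ _, M.2, fun t ht ε ε' s s' hε hε' hs hs' => ?_⟩
  have hmem : ∀ ε s : ℝ, |ε| ≤ 1 → |s| ≤ 1 → p t + ε • q t + s • e ∈ closedBall (p t) (Q + ‖e‖) :=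
    fun ε s hε hs => by
      rw [mem_closedBall, dist_eq_norm, add_assoc, add_sub_cancel_left]
      calc ‖ε • q t + s • e‖ ≤ |ε| * ‖q t‖ + |s| * ‖e‖ := by
            simpa [norm_smul] using norm_add_le (ε • q t) (s • e)
        _ ≤ 1 * Q + 1 * ‖e‖ := by gcongr; exact hQ t ht
        _ = Q + ‖e‖ := by ring
  have h := (hM (p t) (mem_image_of_mem p ht)).dist_le_mul _ (hmem ε s hε hs) _
    (hmem ε' s' hε' hs')
  rw [Real.dist_eq, dist_eq_norm] at h
  refine h.trans (mul_le_mul_of_nonneg_left ?_ M.2)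
  calc ‖p t + ε • q t + s • e - (p t + ε' • q t + s' • e)‖
      = ‖(ε - ε') • q t + (s - s') • e‖ := by congr 1; module
    _ ≤ |ε - ε'| * ‖q t‖ + |s - s'| * ‖e‖ := by
        simpa [norm_smul] using norm_add_le ((ε - ε') • q t) ((s - s') • e)
    _ ≤ |ε - ε'| * max Q 0 + |s - s'| * ‖e‖ := by gcongr; exact (hQ t ht).trans (le_max_left _ _)

theorem exists_clamped_deviation_le (hF : ContDiff ℝ 1 F) (hp : Continuous p)
    (hq : Continuous q) (e : E) {a b : ℝ} (hab : a ≤ b) :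
    ∃ C, ∀ ε : ℝ, |ε| ≤ 1 → ∃ u : ℝ → ℝ, u a = 0 ∧
      (∀ t ∈ Icc a b, HasDerivAt u (F (p t + ε • q t + unitClamp (u t) • e) - F (p t)) t) ∧
      ∀ t ∈ Icc a b, |u t| ≤ C * |ε| := by
  obtain ⟨Q, M, hQ, hM, hest⟩ := exists_abs_sub_le_of_perturbation hF hp hq e (a - 1) (b + 1)
  refine ⟨M * Q * gronwallBound 0 (M * ‖e‖) 1 (b - a), fun ε hε => ?_⟩
  set v := fun t u => F (p t + ε • q t + unitClamp u • e) - F (p t)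
  have hlip : ∀ t ∈ Icc (a - 1) (b + 1), ∀ u u', |v t u - v t u'| ≤ M * ‖e‖ * |u - u'| :=
    fun t ht u u' => by
      have h := hest t ht ε ε _ _ hε hε (abs_unitClamp_le_one u) (abs_unitClamp_le_one u')
      simp only [v, sub_sub_sub_cancel_right, sub_self, abs_zero, zero_mul, zero_add] at h ⊢
      calc _ ≤ _ := h
        _ ≤ M * ‖e‖ * |u - u'| := by
          rw [mul_assoc, mul_comm ‖e‖]
          exact mul_le_mul_of_nonneg_left
            (mul_le_mul_of_nonneg_right (abs_unitClamp_sub_le u u') (norm_nonneg e)) hM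
  have hbound : ∀ t ∈ Icc (a - 1) (b + 1), ∀ u, |v t u| ≤ M * (|ε| * Q + |unitClamp u| * ‖e‖) :=
    fun t ht u => by
      simpa [v] using hest t ht ε 0 _ 0 hε (by simp) (abs_unitClamp_le_one u) (by simp)
  have hFc := hF.continuous
  obtain ⟨u, hu₀, hu⟩ := exists_forall_mem_Ioo_hasDerivAt_of_lipschitzWith (v := v)
    (K := (M * ‖e‖).toNNReal) (M := M * (Q + ‖e‖)) (c := a - 1) (d := b + 1) (t₀ := a)
    ⟨by linarith, by linarith⟩ (fun u => by fun_prop)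
    (fun t ht => LipschitzWith.of_dist_le_mul fun u u' => by
      rw [Real.dist_eq, Real.dist_eq, coe_toNNReal _ (by positivity)]; exact hlip t ht u u')
    (fun t ht u => by
      refine (hbound t ht u).trans (mul_le_mul_of_nonneg_left ?_ hM)
      have := abs_unitClamp_le_one u
      gcongr <;> nlinarith [norm_nonneg e])
    0
  have hu' : ∀ t ∈ Icc a b, HasDerivAt u (v t (u t)) t :=
    fun t ht => hu t ⟨by linarith [ht.1], by linarith [ht.2]⟩
  refine ⟨u, hu₀, hu', fun t ht => ?_⟩
  have hgron := abs_le_of_abs_deriv_le_mul_abs_add (K := M * ‖e‖) (ε := M * Q * |ε|)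
    (by positivity) (by positivity) hu₀ hu'
    (fun t ht => (hbound t ⟨by linarith [ht.1], by linarith [ht.2]⟩ (u t)).trans <| by
      grw [abs_unitClamp_le (u t)]; linarith) t ht
  exact hgron.trans_eq (by ring)

theorem exists_deviation_le (hF : ContDiff ℝ 1 F) (hp : Continuous p) (hq : Continuous q)
    (e : E) {a b : ℝ} (hab : a ≤ b) :
    ∃ C ε₀, 0 < ε₀ ∧ ∀ ε : ℝ, |ε| ≤ ε₀ → ∃ u : ℝ → ℝ, u a = 0 ∧
      (∀ t ∈ Icc a b, HasDerivAt u (F (p t + ε • q t + u t • e) - F (p t)) t) ∧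
      ∀ t ∈ Icc a b, |u t| ≤ C * |ε| := by
  obtain ⟨C, hC⟩ := exists_clamped_deviation_le hF hp hq e hab
  have hC1 : 0 < |C| + 1 := by positivity
  refine ⟨C, 1 / (|C| + 1), by positivity, fun ε hε => ?_⟩
  obtain ⟨u, hu₀, hu, hbound⟩ :=
    hC ε (hε.trans (div_le_one_of_le₀ (by linarith [abs_nonneg C]) hC1.le))
  have hsmall : ∀ t ∈ Icc a b, |u t| ≤ 1 := fun t ht =>
    calc |u t| ≤ C * |ε| := hbound t ht
      _ ≤ |C| * (1 / (|C| + 1)) := mul_le_mul (le_abs_self C) hε (abs_nonneg _) (abs_nonneg _)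
      _ ≤ 1 := by rw [mul_one_div]; exact div_le_one_of_le₀ (by linarith) hC1.le
  exact ⟨u, hu₀, fun t ht => by simpa only [unitClamp_of_abs_le (hsmall t ht)] using hu t ht,
    hbound⟩

theorem exists_abs_perturbation_sub_fderiv_le (hF : ContDiff ℝ 1 F) (hp : Continuous p)
    (hq : Continuous q) (e : E) (a b C : ℝ) {c : ℝ} (hc : 0 < c) :
    ∃ δ > 0, ∀ ε : ℝ, |ε| ≤ δ → ∀ t ∈ Icc a b, ∀ s : ℝ, |s| ≤ C * |ε| →
      |F (p t + ε • q t + s • e) - F (p t) - fderiv ℝ F (p t) e * s -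
        ε * fderiv ℝ F (p t) (q t)| ≤ c * |ε| := by
  obtain ⟨Q, hQ⟩ := (isCompact_Icc (a := a) (b := b)).exists_bound_of_continuousOn hq.continuousOn
  set R := |Q| + |C| * ‖e‖
  have hR : 0 ≤ R := by positivity
  obtain ⟨δ, hδ, htaylor⟩ := hF.exists_forall_norm_sub_sub_fderiv_le
    ((isCompact_Icc (a := a) (b := b)).image hp) (c := c / (R + 1)) (by positivity)
  refine ⟨δ / (R + 1), by positivity, fun ε hε t ht s hs => ?_⟩
  have hh : ‖ε • q t + s • e‖ ≤ R * |ε| := by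
    calc ‖ε • q t + s • e‖ ≤ |ε| * ‖q t‖ + |s| * ‖e‖ := by
          simpa [norm_smul] using norm_add_le (ε • q t) (s • e)
      _ ≤ |ε| * |Q| + (|C| * |ε|) * ‖e‖ := by
          gcongr
          · exact (hQ t ht).trans (le_abs_self Q)
          · exact hs.trans (by gcongr; exact le_abs_self C)
      _ = R * |ε| := by ring
  have hRε : R * |ε| ≤ δ := by
    calc R * |ε| ≤ (R + 1) * (δ / (R + 1)) := by gcongr; linarith
      _ = δ := mul_div_cancel₀ δ (by linarith)
  have h := htaylor (p t) (mem_image_of_mem p ht) _ (hh.trans hRε)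
  rw [map_add, map_smul, map_smul, smul_eq_mul, smul_eq_mul, ← add_assoc, Real.norm_eq_abs] at h
  calc _ = |F (p t + ε • q t + s • e) - F (p t) -
        (ε * fderiv ℝ F (p t) (q t) + s * fderiv ℝ F (p t) e)| := by congr 1; ring
    _ ≤ c / (R + 1) * (R * |ε|) := h.trans (by gcongr)
    _ = c * |ε| * (R / (R + 1)) := by ring
    _ ≤ c * |ε| * 1 := by gcongr; exact div_le_one_of_le₀ (by linarith) (by linarith)
    _ = c * |ε| := mul_one _

theorem exists_abs_integratingFactor_mul_deviation_sub_le (hF : ContDiff ℝ 1 F)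
    (hp : Continuous p) (hq : Continuous q) (e : E) {a b : ℝ} (hab : a ≤ b) (C : ℝ) {c : ℝ}
    (hc : 0 < c) :
    ∃ δ > 0, ∀ ε : ℝ, |ε| ≤ δ → ∀ u : ℝ → ℝ, u a = 0 →
      (∀ t ∈ Icc a b, HasDerivAt u (F (p t + ε • q t + u t • e) - F (p t)) t) →
      (∀ t ∈ Icc a b, |u t| ≤ C * |ε|) →
      |integratingFactor (fun t => fderiv ℝ F (p t) e) a b * u b - ε * ∫ t in a..b,
        integratingFactor (fun t => fderiv ℝ F (p t) e) a t * fderiv ℝ F (p t) (q t)| ≤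
        c * |ε| := by
  set A := fun t => fderiv ℝ F (p t) e
  have hDF : Continuous fun t => fderiv ℝ F (p t) := (hF.continuous_fderiv one_ne_zero).comp hp
  obtain ⟨Λ, hΛ⟩ := (isCompact_Icc (a := a) (b := b)).exists_bound_of_continuousOn
    (continuous_integratingFactor (hDF.clm_apply continuous_const) a).continuousOn
  set D := |Λ| * (b - a)
  have hD : 0 ≤ D := by have := sub_nonneg.2 hab; positivity
  obtain ⟨δ, hδ, hlin⟩ := exists_abs_perturbation_sub_fderiv_le hF hp hq e a b C
    (c := c / (D + 1)) (by positivity)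
  refine ⟨δ, hδ, fun ε hε u hu₀ hu hbound => ?_⟩
  have hmain := abs_integratingFactor_mul_sub_integral_le (Λ := |Λ|)
    (B := fun t => ε * fderiv ℝ F (p t) (q t)) hab (hDF.clm_apply continuous_const)
    (continuous_const.mul (hDF.clm_apply hq)) hu₀ hu
    (fun t ht => (hlin ε hε t ht (u t) (hbound t ht)).trans_eq' (by ring_nf))
    (fun t ht => (le_abs_self _).trans ((hΛ t ht).trans (le_abs_self Λ)))
  rw [show (∫ t in a..b, integratingFactor A a t * (ε * fderiv ℝ F (p t) (q t))) =
      ε * ∫ t in a..b, integratingFactor A a t * fderiv ℝ F (p t) (q t) by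
    rw [← intervalIntegral.integral_const_mul]; simp only [mul_left_comm]] at hmain
  refine hmain.trans ?_
  calc |Λ| * (c / (D + 1) * |ε|) * (b - a) = c * |ε| * (D / (D + 1)) := by ring
    _ ≤ c * |ε| * 1 := by gcongr; exact div_le_one_of_le₀ (by linarith) (by linarith)
    _ = c * |ε| := mul_one _

theorem eventually_exists_deviation_abs_sub_le (hF : ContDiff ℝ 1 F) (hp : Continuous p)
    (hq : Continuous q) (e : E) {a b : ℝ} (hab : a ≤ b) {c : ℝ} (hc : 0 < c) :
    ∀ᶠ ε in 𝓝 (0 : ℝ), ∃ u : ℝ → ℝ, u a = 0 ∧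
      (∀ t ∈ Icc a b, HasDerivAt u (F (p t + ε • q t + u t • e) - F (p t)) t) ∧
      |integratingFactor (fun t => fderiv ℝ F (p t) e) a b * u b - ε * ∫ t in a..b,
        integratingFactor (fun t => fderiv ℝ F (p t) e) a t * fderiv ℝ F (p t) (q t)| ≤
        c * |ε| := by
  obtain ⟨C, ε₀, hε₀, hex⟩ := exists_deviation_le hF hp hq e hab
  obtain ⟨δ, hδ, hlin⟩ := exists_abs_integratingFactor_mul_deviation_sub_le hF hp hq e hab C hc
  filter_upwards [closedBall_mem_nhds (0 : ℝ) (lt_min hε₀ hδ)] with ε hε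
  rw [mem_closedBall, dist_zero_right, Real.norm_eq_abs] at hε
  obtain ⟨u, hu₀, hu, hbound⟩ := hex ε (hε.trans (min_le_left _ _))
  exact ⟨u, hu₀, hu, hlin ε (hε.trans (min_le_right _ _)) u hu₀ hu hbound⟩

end FirstVariation

theorem ContinuousOn.exists_continuous_eqOn_Icc {β : Type*} [TopologicalSpace β] {f : ℝ → β}
    {a b : ℝ} (hf : ContinuousOn f (Icc a b)) (hab : a ≤ b) :
    ∃ g : ℝ → β, Continuous g ∧ EqOn g f (Icc a b) :=
  ⟨IccExtend hab ((Icc a b).domRestrict f), continuous_IccExtend_iff.2 hf.domRestrict,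
    fun _ ht => IccExtend_of_mem hab _ ht⟩

section Herglotz

variable {F : ℝ × ℝ × ℝ × ℝ → ℝ}

theorem deriv_slice₂ (hF : Differentiable ℝ F) (t u v w : ℝ) :
    deriv (fun s => F (t, s, v, w)) u = fderiv ℝ F (t, u, v, w) (0, 1, 0, 0) :=
  ((hF _).hasFDerivAt.comp_hasDerivAt u ((hasDerivAt_const u t).prodMk
    ((hasDerivAt_id u).prodMk ((hasDerivAt_const u v).prodMk (hasDerivAt_const u w))))).deriv

theorem deriv_slice₃ (hF : Differentiable ℝ F) (t u v w : ℝ) :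
    deriv (fun s => F (t, u, s, w)) v = fderiv ℝ F (t, u, v, w) (0, 0, 1, 0) :=
  ((hF _).hasFDerivAt.comp_hasDerivAt v ((hasDerivAt_const v t).prodMk
    ((hasDerivAt_const v u).prodMk ((hasDerivAt_id v).prodMk (hasDerivAt_const v w))))).deriv

theorem deriv_slice₄ (hF : Differentiable ℝ F) (t u v w : ℝ) :
    deriv (fun s => F (t, u, v, s)) w = fderiv ℝ F (t, u, v, w) (0, 0, 0, 1) :=
  ((hF _).hasFDerivAt.comp_hasDerivAt w ((hasDerivAt_const w t).prodMk
    ((hasDerivAt_const w u).prodMk ((hasDerivAt_const w v).prodMk (hasDerivAt_id w))))).deriv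

theorem eventually_exists_herglotz_solution_abs_sub_le (hF : ContDiff ℝ 1 F) {a b : ℝ}
    (hab : a ≤ b) {x z zc η : ℝ → ℝ} (hx : ContDiff ℝ 2 x) (hη : ContDiff ℝ 2 η)
    (hz : ∀ t ∈ Icc a b, HasDerivAt z (F (t, x t, deriv x t, z t)) t) (hzc : Continuous zc)
    (hzcz : EqOn zc z (Icc a b)) {c : ℝ} (hc : 0 < c) :
    ∀ᶠ ε in 𝓝 (0 : ℝ), ∃ w : ℝ → ℝ,
      (∀ t ∈ Icc a b, HasDerivAt w
        (F (t, x t + ε * η t, deriv (fun s => x s + ε * η s) t, w t)) t) ∧ w a = z a ∧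
      |integratingFactor (fun t => fderiv ℝ F (t, x t, deriv x t, zc t) (0, 0, 0, 1)) a b *
          (w b - z b) - ε * ∫ t in a..b,
            integratingFactor (fun t => fderiv ℝ F (t, x t, deriv x t, zc t) (0, 0, 0, 1)) a t *
              fderiv ℝ F (t, x t, deriv x t, zc t) (0, η t, deriv η t, 0)| ≤ c * |ε| := by
  have hp : Continuous fun t => ((t, x t, deriv x t, zc t) : ℝ × ℝ × ℝ × ℝ) := by
    have := hx.continuous; have := hx.continuous_deriv one_le_two; fun_prop
  have hq : Continuous fun t => ((0, η t, deriv η t, 0) : ℝ × ℝ × ℝ × ℝ) := by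
    have := hη.continuous; have := hη.continuous_deriv one_le_two; fun_prop
  filter_upwards [eventually_exists_deviation_abs_sub_le hF hp hq (0, 0, 0, 1) hab hc]
    with ε ⟨u, hu₀, hu, hest⟩
  refine ⟨fun s => z s + u s, fun t ht => ?_, by simp [hu₀], by simpa using hest⟩
  have hy : deriv (fun s => x s + ε * η s) t = deriv x t + ε * deriv η t :=
    ((hx.differentiable two_ne_zero t).hasDerivAt.add
      ((hη.differentiable two_ne_zero t).hasDerivAt.const_mul ε)).deriv
  refine ((hz t ht).add (hu t ht)).congr_deriv ?_
  simp only [hy, hzcz ht, add_sub_cancel]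
  congr 1
  ext <;> simp

theorem herglotz_integral_eq_zero (hF : ContDiff ℝ 1 F) {a b α γ : ℝ} (hab : a ≤ b)
    {x z : ℝ → ℝ} (hx : ContDiff ℝ 2 x) (hxa : x a = α)
    (hz : ∀ t ∈ Icc a b, HasDerivAt z (F (t, x t, deriv x t, z t)) t) (hza : z a = γ)
    (hext :
      (∀ y w : ℝ → ℝ, ContDiff ℝ 2 y → y a = α →
        (∀ t ∈ Icc a b, HasDerivAt w (F (t, y t, deriv y t, w t)) t) →
        w a = γ → z b ≤ w b) ∨
      (∀ y w : ℝ → ℝ, ContDiff ℝ 2 y → y a = α →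
        (∀ t ∈ Icc a b, HasDerivAt w (F (t, y t, deriv y t, w t)) t) →
        w a = γ → w b ≤ z b))
    {η : ℝ → ℝ} (hη : ContDiff ℝ 2 η) (hηa : η a = 0) :
    ∫ t in a..b, integratingFactor
        (fun t => fderiv ℝ F (t, x t, deriv x t, z t) (0, 0, 0, 1)) a t *
      (fderiv ℝ F (t, x t, deriv x t, z t) (0, 1, 0, 0) * η t +
        fderiv ℝ F (t, x t, deriv x t, z t) (0, 0, 1, 0) * deriv η t) = 0 := by
  obtain ⟨zc, hzc, hzcz⟩ := ContinuousOn.exists_continuous_eqOn_Icc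
    (fun t ht => (hz t ht).continuousAt.continuousWithinAt) hab
  set μ := integratingFactor (fun t => fderiv ℝ F (t, x t, deriv x t, zc t) (0, 0, 0, 1)) a
  have hy : ∀ ε, ContDiff ℝ 2 (fun s => x s + ε * η s) ∧ x a + ε * η a = α :=
    fun ε => ⟨hx.add (contDiff_const.mul hη), by simp [hxa, hηa]⟩
  have hJ := eq_zero_of_forall_eventually_exists_abs_sub_mul_le
    (P := fun ε v => ∃ w : ℝ → ℝ, (∀ t ∈ Icc a b, HasDerivAt w
      (F (t, x t + ε * η t, deriv (fun s => x s + ε * η s) t, w t)) t) ∧ w a = γ ∧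
      v = μ b * (w b - z b))
    (fun c hc => (eventually_exists_herglotz_solution_abs_sub_le hF hab hx hη hz hzc hzcz hc).mono
      fun ε ⟨w, hw, hwa, hest⟩ => ⟨_, ⟨w, hw, hwa.trans hza, rfl⟩, hest⟩) ?_
  · refine Eq.trans (integral_congr fun t ht => ?_) hJ
    rw [uIcc_of_le hab] at ht
    have hμ : EqOn (fun t => fderiv ℝ F (t, x t, deriv x t, z t) (0, 0, 0, 1))
        (fun t => fderiv ℝ F (t, x t, deriv x t, zc t) (0, 0, 0, 1)) (Icc a b) :=
      fun s hs => by simp only [hzcz hs]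
    have hsplit : ((0 : ℝ), η t, deriv η t, (0 : ℝ)) =
        η t • ((0 : ℝ), (1 : ℝ), (0 : ℝ), (0 : ℝ)) + deriv η t • (0, 0, 1, 0) := by
      ext <;> simp
    simp only [integratingFactor_congr hμ ht, hsplit, map_add, map_smul, smul_eq_mul, hzcz ht]
    ring
  · rcases hext with hmin | hmax
    · exact Or.inl fun ε v ⟨w, hw, hwa, hv⟩ => hv ▸ mul_nonneg (integratingFactor_pos _ _ _).le
        (sub_nonneg.2 (hmin _ w (hy ε).1 (hy ε).2 hw hwa))
    · exact Or.inr fun ε v ⟨w, hw, hwa, hv⟩ => hv ▸ mul_nonpos_of_nonneg_of_nonpos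
        (integratingFactor_pos _ _ _).le (sub_nonpos.2 (hmax _ w (hy ε).1 (hy ε).2 hw hwa))

end Herglotz

theorem herglotz_natural_boundary_first_order_general
    (a b γ α : ℝ) (hab : a < b)
    (L : ℝ → ℝ → ℝ → ℝ → ℝ)
    (hL : ContDiff ℝ 1 (fun p : ℝ × ℝ × ℝ × ℝ => L p.1 p.2.1 p.2.2.1 p.2.2.2))
    (x z : ℝ → ℝ) (hx : ContDiff ℝ 2 x) (hxa : x a = α)
    (hz : ∀ t ∈ Set.Icc a b, HasDerivAt z (L t (x t) (deriv x t) (z t)) t)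
    (hza : z a = γ)
    (Lx Lv Lz : ℝ → ℝ)
    (hLx : ∀ t, Lx t = deriv (fun u => L t u (deriv x t) (z t)) (x t))
    (hLv : ∀ t, Lv t = deriv (fun u => L t (x t) u (z t)) (deriv x t))
    (hLz : ∀ t, Lz t = deriv (fun u => L t (x t) (deriv x t) u) (z t))
    (hLv1 : ContDiff ℝ 1 Lv) (hLz1 : ContDiff ℝ 1 Lz)
    (lam : ℝ → ℝ)
    -- x extremizes z(b) among trajectories with x(a) = α fixed, x(b) free
    (hext :
      (∀ y w : ℝ → ℝ, ContDiff ℝ 2 y → y a = α →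
        (∀ t ∈ Set.Icc a b, HasDerivAt w (L t (y t) (deriv y t) (w t)) t) →
        w a = γ → z b ≤ w b) ∨
      (∀ y w : ℝ → ℝ, ContDiff ℝ 2 y → y a = α →
        (∀ t ∈ Set.Icc a b, HasDerivAt w (L t (y t) (deriv y t) (w t)) t) →
        w a = γ → w b ≤ z b)) :
    (∀ t ∈ Set.Icc a b, Lx t + Lz t * Lv t - deriv Lv t = 0) ∧
    lam b * Lv b = 0 ∧ Lv b = 0 := by
  set F : ℝ × ℝ × ℝ × ℝ → ℝ := fun p => L p.1 p.2.1 p.2.2.1 p.2.2.2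
  have hFd : Differentiable ℝ F := hL.differentiable one_ne_zero
  have hLx' : Lx = fun t => fderiv ℝ F (t, x t, deriv x t, z t) (0, 1, 0, 0) :=
    funext fun t => (hLx t).trans (deriv_slice₂ hFd _ _ _ _)
  have hLv' : Lv = fun t => fderiv ℝ F (t, x t, deriv x t, z t) (0, 0, 1, 0) :=
    funext fun t => (hLv t).trans (deriv_slice₃ hFd _ _ _ _)
  have hLz' : Lz = fun t => fderiv ℝ F (t, x t, deriv x t, z t) (0, 0, 0, 1) :=
    funext fun t => (hLz t).trans (deriv_slice₄ hFd _ _ _ _)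
  have hLxc : ContinuousOn Lx (Icc a b) := by
    have := hx.continuous; have := hx.continuous_deriv one_le_two
    have := hL.continuous_fderiv one_ne_zero
    have hzc : ContinuousOn z (Icc a b) := fun t ht => (hz t ht).continuousAt.continuousWithinAt
    rw [hLx']; fun_prop
  obtain ⟨hEL, hLvb⟩ := euler_lagrange_of_forall_integral_eq_zero hab hLz1.continuous hLxc hLv1
    fun η hη hηa => by
      rw [hLx', hLv', hLz']
      exact herglotz_integral_eq_zero hL hab.le hx hxa hz hza hext (hη.of_le (by norm_cast)) hηa
  exact ⟨hEL, by rw [hLvb, mul_zero], hLvb⟩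

/-- Natural boundary conditions for the Herglotz problem
(first order, free right endpoint). -/
theorem herglotz_natural_boundary_first_order
    (a b γ α : ℝ) (hab : a < b)
    (L : ℝ → ℝ → ℝ → ℝ → ℝ)
    (hL : ContDiff ℝ 1 (fun p : ℝ × ℝ × ℝ × ℝ => L p.1 p.2.1 p.2.2.1 p.2.2.2))
    (x z : ℝ → ℝ) (hx : ContDiff ℝ 2 x) (hxa : x a = α)
    (hz : ∀ t ∈ Set.Icc a b, HasDerivAt z (L t (x t) (deriv x t) (z t)) t)
    (hza : z a = γ)
    (Lx Lv Lz : ℝ → ℝ)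
    (hLx : ∀ t, Lx t = deriv (fun u => L t u (deriv x t) (z t)) (x t))
    (hLv : ∀ t, Lv t = deriv (fun u => L t (x t) u (z t)) (deriv x t))
    (hLz : ∀ t, Lz t = deriv (fun u => L t (x t) (deriv x t) u) (z t))
    (hLv1 : ContDiff ℝ 1 Lv) (hLz1 : ContDiff ℝ 1 Lz)
    (lam : ℝ → ℝ) (hlam : ∀ t, lam t = Real.exp (-∫ θ in a..t, Lz θ))
    -- x extremizes z(b) among trajectories with x(a) = α fixed, x(b) free
    (hext :
      (∀ y w : ℝ → ℝ, ContDiff ℝ 2 y → y a = α →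
        (∀ t ∈ Set.Icc a b, HasDerivAt w (L t (y t) (deriv y t) (w t)) t) →
        w a = γ → z b ≤ w b) ∨
      (∀ y w : ℝ → ℝ, ContDiff ℝ 2 y → y a = α →
        (∀ t ∈ Set.Icc a b, HasDerivAt w (L t (y t) (deriv y t) (w t)) t) →
        w a = γ → w b ≤ z b)) :
    (∀ t ∈ Set.Icc a b, Lx t + Lz t * Lv t - deriv Lv t = 0) ∧
    lam b * Lv b = 0 ∧ Lv b = 0 :=
  herglotz_natural_boundary_first_order_general a b γ α hab L hL x z hx hxa hz hza Lx Lv Lz hLx hLv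
    hLz hLv1 hLz1 lam hext
end

section
/- Explicit extremal for the linear-in-z problem: The functions x(t) = ((1-t)e^{t+1} + (2t-1)e^t + (e-3)et - e + 1)/(e² - 3e + 1) and z(t) = [((1+t²)e^{t+2} - 2(2t²+t+2)e^{t+1} + (4t²+4t+5)e^t + e⁴ - 6e³ + 10e² - 2e - 4)·e^t]/(e²-3e+1)² on [0,1] satisfy ż(t) = ẍ(t)² + z(t), x⁽⁴⁾(t) - 2x⁽³⁾(t) + ẍ(t) = 0, z(0) = 1, x(0) = 0, ẋ(0) = 1, x(1) = 1, ẋ(1) = 0, and z(1) = (e² - e - 4)e/(e² - 3e + 1). -/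
/-!
The denominator `e² - 3e + 1` does not vanish because `e > (3 + √5)/2`. After clearing it,
`x = (at + b)eᵗ + ct + d`, which lies in the kernel of `D²(D - 1)²`, the operator of
`x⁽⁴⁾ - 2x⁽³⁾ + ẍ`, and `ẍ = (at + r)eᵗ` with `r = 2a + b`. Likewise `z = q(t)(eᵗ)² + Keᵗ`
with `q` the quadratic solving `q' + q = (at + r)²`, so that `ż - z = (q' + q)(eᵗ)² = ẍ²`.
The boundary values are direct evaluations.
-/

open Real

lemma hasDerivAt_affine_mul_exp (a b t : ℝ) :
    HasDerivAt (fun s => (a * s + b) * exp s) ((a * t + (a + b)) * exp t) t := by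
  have h := (((hasDerivAt_id' t).const_mul a).add_const b).fun_mul (hasDerivAt_exp t)
  exact h.congr_deriv (by ring)

lemma iteratedDeriv_affine_mul_exp (n : ℕ) (a b : ℝ) :
    iteratedDeriv n (fun s => (a * s + b) * exp s) = fun s => (a * s + (n * a + b)) * exp s := by
  induction n with
  | zero => simp
  | succ n ih =>
    funext t
    rw [iteratedDeriv_succ, ih, (hasDerivAt_affine_mul_exp a (n * a + b) t).deriv]
    push_cast
    ring

lemma hasDerivAt_affine_mul_exp_add_affine (a b c d t : ℝ) :
    HasDerivAt (fun s => (a * s + b) * exp s + (c * s + d)) ((a * t + (a + b)) * exp t + c) t := by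
  have h := (hasDerivAt_affine_mul_exp a b t).fun_add
    (((hasDerivAt_id' t).const_mul c).add_const d)
  simpa only [mul_one] using h

lemma iteratedDeriv_add_two_affine_mul_exp_add_affine (n : ℕ) (a b c d : ℝ) :
    iteratedDeriv (n + 2) (fun s => (a * s + b) * exp s + (c * s + d)) =
      fun s => (a * s + ((n + 2) * a + b)) * exp s := by
  have h₁ : deriv (fun s => (a * s + b) * exp s + (c * s + d)) =
      fun s => (a * s + (a + b)) * exp s + c :=
    funext fun t => (hasDerivAt_affine_mul_exp_add_affine a b c d t).deriv
  have h₂ : deriv (fun s => (a * s + (a + b)) * exp s + c) =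
      fun s => (a * s + (2 * a + b)) * exp s := by
    funext t
    rw [((hasDerivAt_affine_mul_exp a (a + b) t).add_const c).deriv]
    ring
  rw [iteratedDeriv_succ', iteratedDeriv_succ', h₁, h₂, iteratedDeriv_affine_mul_exp]
  funext s
  ring

lemma affine_mul_exp_add_affine_ode (a b c d t : ℝ) :
    let f := fun s => (a * s + b) * exp s + (c * s + d)
    iteratedDeriv 4 f t - 2 * iteratedDeriv 3 f t + iteratedDeriv 2 f t = 0 := by
  intro f
  rw [iteratedDeriv_add_two_affine_mul_exp_add_affine 2,
    iteratedDeriv_add_two_affine_mul_exp_add_affine 1,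
    iteratedDeriv_add_two_affine_mul_exp_add_affine 0]
  push_cast
  ring

lemma hasDerivAt_quadratic_mul_exp_sq_add (p r K t : ℝ) :
    HasDerivAt (fun s => (p ^ 2 * s ^ 2 + 2 * p * (r - p) * s + (r ^ 2 - 2 * p * r + 2 * p ^ 2))
        * exp s ^ 2 + K * exp s)
      (((p * t + r) * exp t) ^ 2 + ((p ^ 2 * t ^ 2 + 2 * p * (r - p) * t
        + (r ^ 2 - 2 * p * r + 2 * p ^ 2)) * exp t ^ 2 + K * exp t)) t := by
  have hq : HasDerivAt
      (fun s => p ^ 2 * s ^ 2 + 2 * p * (r - p) * s + (r ^ 2 - 2 * p * r + 2 * p ^ 2))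
      (p ^ 2 * (2 * t) + 2 * p * (r - p)) t := by
    simpa using (((hasDerivAt_pow 2 t).const_mul (p ^ 2)).add
      ((hasDerivAt_id t).const_mul (2 * p * (r - p)))).add_const (r ^ 2 - 2 * p * r + 2 * p ^ 2)
  have h := (hq.fun_mul ((hasDerivAt_exp t).fun_pow 2)).fun_add ((hasDerivAt_exp t).const_mul K)
  exact h.congr_deriv (by push_cast; ring)

/-- Explicit extremal for the linear-in-z second-order Herglotz problem
ż = ẍ² + z, z(0) = 1. -/
theorem herglotz_linear_in_z_extremal
    (e : ℝ) (he : e = Real.exp 1) (x z : ℝ → ℝ)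
    (hx : ∀ t, x t =
      ((1 - t) * Real.exp (t + 1) + (2 * t - 1) * Real.exp t + (e - 3) * e * t
        - e + 1) / (e ^ 2 - 3 * e + 1))
    (hz : ∀ t, z t =
      (((1 + t ^ 2) * Real.exp (t + 2) - 2 * (2 * t ^ 2 + t + 2) * Real.exp (t + 1)
          + (4 * t ^ 2 + 4 * t + 5) * Real.exp t
          + e ^ 4 - 6 * e ^ 3 + 10 * e ^ 2 - 2 * e - 4) * Real.exp t) /
        (e ^ 2 - 3 * e + 1) ^ 2) :
    (∀ t ∈ Set.Icc (0 : ℝ) 1,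
      HasDerivAt z ((iteratedDeriv 2 x t) ^ 2 + z t) t) ∧
    (∀ t ∈ Set.Icc (0 : ℝ) 1,
      iteratedDeriv 4 x t - 2 * iteratedDeriv 3 x t + iteratedDeriv 2 x t = 0) ∧
    z 0 = 1 ∧ x 0 = 0 ∧ deriv x 0 = 1 ∧ x 1 = 1 ∧ deriv x 1 = 0 ∧
    z 1 = (e ^ 2 - e - 4) * e / (e ^ 2 - 3 * e + 1) := by
  have he_gt : 2.7182818283 < e := he ▸ exp_one_gt_d9
  have hD : e ^ 2 - 3 * e + 1 ≠ 0 := by nlinarith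
  have hexp_one : exp 1 = e := he.symm
  have hexp_add_one (t : ℝ) : exp (t + 1) = exp t * e := by rw [exp_add, hexp_one]
  have hexp_add_two (t : ℝ) : exp (t + 2) = exp t * e ^ 2 := by
    rw [show t + 2 = t + 1 + 1 by ring, hexp_add_one, hexp_add_one]
    ring
  set D := e ^ 2 - 3 * e + 1
  set a := (2 - e) / D with ha
  set b := (e - 1) / D with hb
  set r := 2 * a + b with hr
  set K := (e ^ 4 - 6 * e ^ 3 + 10 * e ^ 2 - 2 * e - 4) / D ^ 2 with hK
  have hx_eq : x = fun s => (a * s + b) * exp s + ((e - 3) * e / D * s + (1 - e) / D) := by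
    funext s
    rw [hx, hexp_add_one, ha, hb]
    field_simp
    ring
  have hz_eq : z = fun s => (a ^ 2 * s ^ 2 + 2 * a * (r - a) * s + (r ^ 2 - 2 * a * r + 2 * a ^ 2))
      * exp s ^ 2 + K * exp s := by
    funext s
    rw [hz, hexp_add_one, hexp_add_two, hr, ha, hb, hK]
    field_simp
    ring
  have hx_deriv : deriv x = fun s => (a * s + (a + b)) * exp s + (e - 3) * e / D := by
    rw [hx_eq]
    exact funext fun s => (hasDerivAt_affine_mul_exp_add_affine _ _ _ _ s).deriv
  have hx_deriv_two : iteratedDeriv 2 x = fun s => (a * s + r) * exp s := by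
    rw [hx_eq, iteratedDeriv_add_two_affine_mul_exp_add_affine 0]
    norm_num [hr]
  rw [hx_deriv]
  refine ⟨fun t _ => ?_, fun t _ => ?_, ?_, ?_, ?_, ?_, ?_, ?_⟩
  · rw [hx_deriv_two, hz_eq]
    exact hasDerivAt_quadratic_mul_exp_sq_add a r K t
  · rw [hx_eq]
    exact affine_mul_exp_add_affine_ode _ _ _ _ t
  all_goals
    simp only [hx_eq, hz_eq, hr, ha, hb, hK, exp_zero, hexp_one]
    field_simp
    ring
end
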